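/- Terracini's lemma (linearized statement): let φ: M₁ × M₂ → ℂ^{N+1} be the addition map (v,w) ↦ v + w restricted to smooth points of the affine cones over varieties Y₁, Y₂ ⊂ ℙ^N. Then the image of the differential of φ at (v,w) equals T_v Ĉ(Y₁) + T_w Ĉ(Y₂), the sum of the affine tangent spaces; consequently the embedded projective tangent space to the join S(Y₁,Y₂) at a general point of the line spanned by y₁ ∈ Y₁ and y₂ ∈ Y₂ contains the span of T̃_{y₁}Y₁ and T̃_{y₂}Y₂. -/
import Mathlib


/-!
Common framework: we model a projective variety `Y ⊆ ℙ^N = ℙ(ℂ^{N+1})` by its affine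
cone `C ⊆ ℂ^{N+1}` (a Zariski-closed subset stable under scalar multiplication).
With this convention the affine dimension `adim C` equals `dim Y + 1`.
-/

open MvPolynomial Pointwise

noncomputable section

/-- The polynomials vanishing on a subset `S ⊆ ℂ^m`. -/
def vanishIdeal (m : ℕ) (S : Set (Fin m → ℂ)) : Set (MvPolynomial (Fin m) ℂ) :=
  {f | ∀ x ∈ S, eval x f = 0}

/-- Zariski-closed subsets of affine space `ℂ^m`. -/
def ZClosed {m : ℕ} (S : Set (Fin m → ℂ)) : Prop :=
  ∃ I : Set (MvPolynomial (Fin m) ℂ), S = {x | ∀ f ∈ I, eval x f = 0}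

/-- The Zariski closure of a subset of `ℂ^m`. -/
def ZClosure {m : ℕ} (S : Set (Fin m → ℂ)) : Set (Fin m → ℂ) :=
  {x | ∀ f ∈ vanishIdeal m S, eval x f = 0}

/-- Irreducible Zariski-closed subsets. -/
def IrredClosed {m : ℕ} (S : Set (Fin m → ℂ)) : Prop :=
  ZClosed S ∧ S.Nonempty ∧
    ∀ S₁ S₂ : Set (Fin m → ℂ), ZClosed S₁ → ZClosed S₂ → S ⊆ S₁ ∪ S₂ → S ⊆ S₁ ∨ S ⊆ S₂

/-- The (affine, Krull) dimension of a subset of `ℂ^m`: the Krull dimension of the poset of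
irreducible closed subsets of its Zariski closure.  For the affine cone `C` over a projective
variety `Y` one has `adim C = dim Y + 1`. -/
def adim {m : ℕ} (S : Set (Fin m → ℂ)) : WithBot ℕ∞ :=
  Order.krullDim {T : Set (Fin m → ℂ) // IrredClosed T ∧ T ⊆ ZClosure S}

/-- A cone: a subset stable under multiplication by all scalars. -/
def IsCone {m : ℕ} (S : Set (Fin m → ℂ)) : Prop :=
  ∀ (c : ℂ), ∀ v ∈ S, c • v ∈ S

/-- The directional-derivative functional of a polynomial `f` at the point `v`. -/
def dirDerivL {m : ℕ} (v : Fin m → ℂ) (f : MvPolynomial (Fin m) ℂ) :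
    (Fin m → ℂ) →ₗ[ℂ] ℂ :=
  ∑ i, (eval v (pderiv i f)) • (LinearMap.proj i)

/-- The (affine) Zariski tangent space of `S ⊆ ℂ^m` at `v`: the directions annihilated by the
differentials at `v` of all polynomials vanishing on `S`.  For the cone over a projective
variety this is the affine cone over the embedded projective tangent space. -/
def zTangent {m : ℕ} (S : Set (Fin m → ℂ)) (v : Fin m → ℂ) : Submodule ℂ (Fin m → ℂ) :=
  ⨅ f ∈ vanishIdeal m S, LinearMap.ker (dirDerivL v f)

/-- A smooth point of `S`: a point of `S` where the Zariski tangent space has the minimal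
possible dimension, namely `adim S`. -/
def IsSmoothPt {m : ℕ} (S : Set (Fin m → ℂ)) (v : Fin m → ℂ) : Prop :=
  v ∈ S ∧ ((Module.finrank ℂ (zTangent S v) : ℕ∞) : WithBot ℕ∞) = adim S

/-- The fiber through `v` of the Gauss map of (the variety with affine cone) `S`:
the locus of points of `S` with the same embedded tangent space as `v`. -/
def gaussFiber {m : ℕ} (S : Set (Fin m → ℂ)) (v : Fin m → ℂ) : Set (Fin m → ℂ) :=
  {w ∈ S | zTangent S w = zTangent S v}

/-- `P` holds generically on `S` (i.e. away from a proper Zariski-closed subset). -/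
def Generically {m : ℕ} (S : Set (Fin m → ℂ)) (P : (Fin m → ℂ) → Prop) : Prop :=
  ∃ Z : Set (Fin m → ℂ), ZClosed Z ∧ ¬ S ⊆ Z ∧ ∀ v ∈ S \ Z, P v

end

section Aux

open MvPolynomial

lemma eval_bind_affine {m : ℕ} (a : ℂ) (c x : Fin m → ℂ) (f : MvPolynomial (Fin m) ℂ) :
    eval x (bind₁ (fun j => C a * X j + C (c j)) f) = eval (fun j => a * x j + c j) f := by
  induction f using MvPolynomial.induction_on with
  | C => simp
  | add f g hf hg => simp [hf, hg]
  | mul_X f j hf => simp [hf]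

lemma pderiv_bind_affine {m : ℕ} (a : ℂ) (c : Fin m → ℂ) (f : MvPolynomial (Fin m) ℂ)
    (i : Fin m) :
    pderiv i (bind₁ (fun j => C a * X j + C (c j)) f)
      = C a * bind₁ (fun j => C a * X j + C (c j)) (pderiv i f) := by
  induction f using MvPolynomial.induction_on with
  | C => simp
  | add f g hf hg => simp [hf, hg]; ring
  | mul_X f j hf =>
      rcases eq_or_ne i j with rfl | hij
      · simp [pderiv_mul, hf, Pi.single_apply]; ring
      · simp [pderiv_mul, hf, Pi.single_apply, hij]; ring

lemma dirDerivL_apply {m : ℕ} (v : Fin m → ℂ) (f : MvPolynomial (Fin m) ℂ)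
    (u : Fin m → ℂ) : dirDerivL v f u = ∑ i, eval v (pderiv i f) * u i := by
  simp [dirDerivL, LinearMap.sum_apply]

lemma mem_zTangent_iff {m : ℕ} (S : Set (Fin m → ℂ)) (v u : Fin m → ℂ) :
    u ∈ zTangent S v ↔ ∀ f ∈ vanishIdeal m S, dirDerivL v f u = 0 := by
  simp [zTangent, Submodule.mem_iInf, LinearMap.mem_ker]

lemma zTangent_le_affine {m : ℕ} (S D : Set (Fin m → ℂ)) (a : ℂ) (ha : a ≠ 0)
    (p₀ : Fin m → ℂ) (hCD : ∀ x ∈ S, a • x + p₀ ∈ D) (v : Fin m → ℂ) :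
    zTangent S v ≤ zTangent D (a • v + p₀) := by
  intro u hu
  rw [mem_zTangent_iff] at hu ⊢
  intro f hf
  have hg : bind₁ (fun j => C a * X j + C (p₀ j)) f ∈ vanishIdeal m S := by
    intro x hx
    rw [eval_bind_affine]
    have : (fun j => a * x j + p₀ j) = a • x + p₀ := by
      funext j; simp [Pi.add_apply, Pi.smul_apply, smul_eq_mul]
    rw [this]
    exact hf _ (hCD x hx)
  have h0 := hu _ hg
  rw [dirDerivL_apply] at h0
  have hkey : ∀ i, eval v (pderiv i (bind₁ (fun j => C a * X j + C (p₀ j)) f))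
      = a * eval (a • v + p₀) (pderiv i f) := by
    intro i
    rw [pderiv_bind_affine]
    have : (fun j => a * v j + p₀ j) = a • v + p₀ := by
      funext j; simp [Pi.add_apply, Pi.smul_apply, smul_eq_mul]
    simp [eval_bind_affine, this]
  rw [dirDerivL_apply]
  have : a * ∑ i, eval (a • v + p₀) (pderiv i f) * u i = 0 := by
    rw [Finset.mul_sum]
    rw [← h0]
    exact Finset.sum_congr rfl fun i _ => by rw [hkey i]; ring
  exact (mul_eq_zero.mp this).resolve_left ha

lemma subset_ZClosure {m : ℕ} (S : Set (Fin m → ℂ)) : S ⊆ ZClosure S :=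
  fun x hx f hf => hf x hx

lemma vanishIdeal_ZClosure_le {m : ℕ} (S : Set (Fin m → ℂ)) :
    vanishIdeal m (ZClosure S) ⊆ vanishIdeal m S :=
  fun f hf x hx => hf x (subset_ZClosure S hx)

lemma zTangent_anti {m : ℕ} {S T : Set (Fin m → ℂ)}
    (h : vanishIdeal m T ⊆ vanishIdeal m S) (v : Fin m → ℂ) :
    zTangent S v ≤ zTangent T v := by
  intro u hu
  rw [mem_zTangent_iff] at hu ⊢
  exact fun f hf => hu f (h hf)

end Aux

/-- **Terracini's lemma, linearized.** For the addition map
`φ(v,w) = v + w` on the affine cones `C₁, C₂` over `Y₁, Y₂ ⊂ ℙ^N`, the image of the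
differential of `φ` at a pair of smooth points `(v,w)` (the differential of addition being
addition itself) equals the sum `T_v Ĉ(Y₁) + T_w Ĉ(Y₂)` of the affine tangent spaces;
consequently the embedded projective tangent space to the join `S(Y₁,Y₂)` at a general
point `a•v + b•w` of the line spanned by `[v] ∈ Y₁`, `[w] ∈ Y₂` contains the span of
`T̃_{[v]}Y₁` and `T̃_{[w]}Y₂`. -/
theorem terracini_lemma {N : ℕ} (C₁ C₂ : Set (Fin (N + 1) → ℂ))
    (h₁c : ZClosed C₁) (h₂c : ZClosed C₂) (h₁ : IsCone C₁) (h₂ : IsCone C₂)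
    (v w : Fin (N + 1) → ℂ) (hv : IsSmoothPt C₁ v) (hw : IsSmoothPt C₂ w) :
    (Submodule.map
        ((LinearMap.fst ℂ (Fin (N + 1) → ℂ) (Fin (N + 1) → ℂ)) +
          (LinearMap.snd ℂ (Fin (N + 1) → ℂ) (Fin (N + 1) → ℂ)))
        ((zTangent C₁ v).prod (zTangent C₂ w))
      = zTangent C₁ v ⊔ zTangent C₂ w) ∧
    (∀ a b : ℂ, a ≠ 0 → b ≠ 0 →
      zTangent C₁ v ⊔ zTangent C₂ w ≤ zTangent (ZClosure (C₁ + C₂)) (a • v + b • w)) := by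
  constructor
  · ext x
    simp only [Submodule.mem_map, Submodule.mem_prod, Submodule.mem_sup,
      LinearMap.add_apply, LinearMap.fst_apply, LinearMap.snd_apply, Prod.exists]
    constructor
    · rintro ⟨y, z, ⟨hy, hz⟩, rfl⟩
      exact ⟨y, hy, z, hz, rfl⟩
    · rintro ⟨y, hy, z, hz, rfl⟩
      exact ⟨y, z, ⟨hy, hz⟩, rfl⟩
  · intro a b ha hb
    apply sup_le
    · have h1 : zTangent C₁ v ≤ zTangent (C₁ + C₂) (a • v + b • w) := by
        apply zTangent_le_affine _ _ a ha
        intro x hx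
        exact Set.add_mem_add (h₁ a x hx) (h₂ b w hw.1)
      exact h1.trans (zTangent_anti (vanishIdeal_ZClosure_le _) _)
    · have h2 : zTangent C₂ w ≤ zTangent (C₁ + C₂) (b • w + a • v) := by
        apply zTangent_le_affine _ _ b hb
        intro x hx
        simpa [add_comm] using Set.add_mem_add (h₁ a v hv.1) (h₂ b x hx)
      rw [add_comm (a • v)]
      exact h2.trans (zTangent_anti (vanishIdeal_ZClosure_le _) _)
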